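/- arXiv:math/0703238 — 3 statements merged into one kernel-verified Lean document; each statement's English description precedes it below -/
import Mathlib

section
/- Let h be a holomorphic function on an open set U ⊆ ℂ and let p > 0. At every point z ∈ U where h(z) ≠ 0, the function |h|^p is smooth near z and its Laplacian satisfies Δ(|h|^p)(z) = p² |h(z)|^{p-2} |h'(z)|². -/
open Complex Topology

lemma hasFDerivAt_real_of_complex {f : ℂ → ℂ} {w : ℂ} (hf : DifferentiableAt ℂ f w) :
    HasFDerivAt f ((deriv f w) • (1 : ℂ →L[ℝ] ℂ)) w := by
  have H := (hf.hasDerivAt).hasFDerivAt.restrictScalars ℝ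
  refine H.congr_fderiv ?_
  ext v
  simp [mul_comm]

lemma my_hasFDerivAt_norm_rpow (h : ℂ → ℂ) (q : ℝ) {w : ℂ}
    (hd : DifferentiableAt ℂ h w) (hw : h w ≠ 0) :
    HasFDerivAt (fun v => ‖h v‖ ^ q)
      ((q * ‖h w‖ ^ (q - 2)) • (Complex.reCLM.comp
        (((starRingEnd ℂ) (h w) * deriv h w) • (1 : ℂ →L[ℝ] ℂ)))) w := by
  have hF := hasFDerivAt_real_of_complex hd
  have hN : HasFDerivAt (fun v => ‖h v‖ ^ 2)
      (2 • (innerSL ℝ (h w)).comp ((deriv h w) • (1 : ℂ →L[ℝ] ℂ))) w := hF.norm_sq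
  have hpos : (0:ℝ) < ‖h w‖ := norm_pos_iff.mpr hw
  have hR : HasDerivAt (fun t : ℝ => t ^ (q/2)) (q/2 * (‖h w‖^2) ^ (q/2 - 1)) (‖h w‖^2) :=
    Real.hasDerivAt_rpow_const (Or.inl (by positivity))
  have hC := hR.comp_hasFDerivAt w hN
  have hfun : (fun v => ‖h v‖ ^ q) = fun v => (‖h v‖ ^ 2) ^ (q/2) := by
    funext v
    rw [← Real.rpow_natCast ‖h v‖ 2, ← Real.rpow_mul (norm_nonneg _)]
    congr 1
    ring
  rw [hfun]
  refine hC.congr_fderiv ?_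
  have h1 : ((‖h w‖:ℝ)^2) ^ (q/2 - 1) = ‖h w‖ ^ (q - 2) := by
    rw [← Real.rpow_natCast ‖h w‖ 2, ← Real.rpow_mul (norm_nonneg _)]
    congr 1
    ring
  ext v
  simp only [ContinuousLinearMap.smul_apply, ContinuousLinearMap.coe_comp',
    Function.comp_apply, ContinuousLinearMap.one_apply, innerSL_apply_apply, Complex.inner,
    smul_eq_mul, h1, Complex.reCLM_apply, ContinuousLinearMap.coe_smul', Pi.smul_apply,
    nsmul_eq_mul, Nat.cast_ofNat]
  rw [mul_assoc (starRingEnd ℂ (h w))]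
  ring

/-- If `h` is holomorphic on an open `U ⊆ ℂ`, `p > 0`, and `h(z) ≠ 0`, then
`|h|^p` is smooth near `z` and `Δ(|h|^p)(z) = p² |h(z)|^{p-2} |h'(z)|²`,
where the Laplacian is the sum of the second derivatives in the directions
`1` and `I`. -/
theorem laplacian_abs_pow (U : Set ℂ) (hU : IsOpen U) (h : ℂ → ℂ)
    (hh : DifferentiableOn ℂ h U) (p : ℝ) (hp : 0 < p)
    (z : ℂ) (hz : z ∈ U) (hnz : h z ≠ 0) :
    ContDiffAt ℝ (⊤ : ℕ∞) (fun w : ℂ => ‖h w‖ ^ p) z ∧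
    (fderiv ℝ (fun w : ℂ => fderiv ℝ (fun v : ℂ => ‖h v‖ ^ p) w 1) z 1
      + fderiv ℝ (fun w : ℂ => fderiv ℝ (fun v : ℂ => ‖h v‖ ^ p) w Complex.I) z
          Complex.I)
      = p ^ 2 * ‖h z‖ ^ (p - 2) * ‖deriv h z‖ ^ 2 := by
  have han : AnalyticOnNhd ℂ h U := hh.analyticOnNhd hU
  have hbn : AnalyticOnNhd ℂ (deriv h) U := han.deriv
  have hsmooth : ContDiffAt ℝ (⊤ : ℕ∞) (fun w : ℂ => ‖h w‖ ^ p) z := by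
    have h1 : ContDiffAt ℝ (⊤ : ℕ∞) h z := ((han z hz).contDiffAt).restrict_scalars ℝ
    have h2 : ContDiffAt ℝ (⊤ : ℕ∞) (fun w => ‖h w‖) z := (contDiffAt_norm ℝ hnz).comp z h1
    exact (Real.contDiffAt_rpow_const_of_ne (norm_ne_zero_iff.mpr hnz)).comp z h2
  refine ⟨hsmooth, ?_⟩
  have hmem : ∀ᶠ w in 𝓝 z, w ∈ U ∧ h w ≠ 0 := by
    have ho : IsOpen (U ∩ h ⁻¹' ({0}ᶜ)) :=
      hh.continuousOn.isOpen_inter_preimage hU isOpen_compl_singleton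
    have : U ∩ h ⁻¹' ({0}ᶜ) ∈ 𝓝 z := ho.mem_nhds ⟨hz, hnz⟩
    filter_upwards [this] with w hw
    exact ⟨hw.1, hw.2⟩
  -- first derivative formula, eventually
  have hev : ∀ e : ℂ, (fun w => fderiv ℝ (fun v => ‖h v‖ ^ p) w e) =ᶠ[𝓝 z]
      (fun w => p * (‖h w‖ ^ (p-2) * ((starRingEnd ℂ) (h w) * deriv h w * e).re)) := by
    intro e
    filter_upwards [hmem] with w hw
    rw [(my_hasFDerivAt_norm_rpow h p (hh.differentiableAt (hU.mem_nhds hw.1)) hw.2).fderiv]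
    simp only [ContinuousLinearMap.smul_apply, ContinuousLinearMap.coe_comp',
      Function.comp_apply, ContinuousLinearMap.one_apply, ContinuousLinearMap.coe_smul',
      Pi.smul_apply, smul_eq_mul, Complex.reCLM_apply]
    ring
  have hdz : DifferentiableAt ℂ h z := hh.differentiableAt (hU.mem_nhds hz)
  have hbz : DifferentiableAt ℂ (deriv h) z := (hbn z hz).differentiableAt
  have hconj : HasFDerivAt (fun w => (starRingEnd ℂ) (h w))
      (Complex.conjCLE.toContinuousLinearMap.comp ((deriv h z) • (1 : ℂ →L[ℝ] ℂ))) z :=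
    Complex.conjCLE.toContinuousLinearMap.hasFDerivAt.comp z (hasFDerivAt_real_of_complex hdz)
  have hder : HasFDerivAt (deriv h) ((deriv (deriv h) z) • (1 : ℂ →L[ℝ] ℂ)) z :=
    hasFDerivAt_real_of_complex hbz
  have hA := my_hasFDerivAt_norm_rpow h (p-2) hdz hnz
  -- second derivative in direction e
  have key : ∀ e : ℂ,
      fderiv ℝ (fun w => p * (‖h w‖ ^ (p-2) * ((starRingEnd ℂ) (h w) * deriv h w * e).re)) z e
      = p * (‖h z‖ ^ (p-2) *
            ((starRingEnd ℂ) (h z) * (deriv (deriv h) z * e) * e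
              + (starRingEnd ℂ) (deriv h z * e) * (deriv h z) * e).re
          + ((starRingEnd ℂ) (h z) * deriv h z * e).re *
            (((p-2) * ‖h z‖ ^ (p-2-2)) * ((starRingEnd ℂ) (h z) * deriv h z * e).re)) := by
    intro e
    have hBe : HasFDerivAt (fun w => ((starRingEnd ℂ) (h w) * deriv h w * e).re)
        (Complex.reCLM.comp (e • ((starRingEnd ℂ) (h z) • (deriv (deriv h) z) • (1 : ℂ →L[ℝ] ℂ)
          + deriv h z • Complex.conjCLE.toContinuousLinearMap.comp
              ((deriv h z) • (1 : ℂ →L[ℝ] ℂ))))) z :=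
      Complex.reCLM.hasFDerivAt.comp z ((hconj.mul hder).mul_const e)
    have hG : HasFDerivAt (fun w => p * (‖h w‖ ^ (p-2) * ((starRingEnd ℂ) (h w) * deriv h w * e).re)) _ z :=
      (hA.mul hBe).const_mul p
    rw [hG.fderiv]
    simp only [ContinuousLinearMap.smul_apply, ContinuousLinearMap.add_apply,
      ContinuousLinearMap.coe_comp', Function.comp_apply, ContinuousLinearMap.one_apply,
      ContinuousLinearMap.coe_smul', Pi.smul_apply, smul_eq_mul, Complex.reCLM_apply,
      ContinuousLinearEquiv.coe_coe, Complex.conjCLE_apply]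
    ring_nf
  rw [(hev 1).fderiv_eq, (hev Complex.I).fderiv_eq, key 1, key Complex.I]
  have hpos : (0:ℝ) < ‖h z‖ := norm_pos_iff.mpr hnz
  have hr : ‖h z‖ ^ (p-2-2) * ((h z).re*(h z).re + (h z).im*(h z).im) = ‖h z‖ ^ (p-2) := by
    rw [← Complex.normSq_apply, ← Complex.sq_norm,
      ← Real.rpow_natCast ‖h z‖ 2, ← Real.rpow_add hpos]
    congr 1
    push_cast
    ring
  simp only [Complex.mul_re, Complex.mul_im, Complex.conj_re, Complex.conj_im,
    Complex.I_re, Complex.I_im, Complex.one_re, Complex.one_im, mul_one, mul_zero,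
    zero_mul, sub_zero, zero_sub, neg_mul, mul_neg, neg_neg, Complex.add_re,
    Complex.add_im, Complex.sub_re, Complex.sub_im, Complex.neg_re, Complex.neg_im,
    Complex.sq_norm, Complex.normSq_apply] at hr ⊢
  linear_combination (p*(p-2)*((deriv h z).re*(deriv h z).re + (deriv h z).im*(deriv h z).im)) * hr
end

section
/- Let α > -1 and let μ be a finite positive Borel measure on the closed unit disk. Suppose there exists c > 0 such that for every t ∈ (0,1), ∫ |1 - tz|^{-2α-4} dμ(z) ≤ c·(1-t²)^{-α-2}. Then there exists a ≥ 1 such that for every s ∈ (0,1], μ({z : |z| ≤ 1, |1 - z| < s}) ≤ a·s^{α+2}. -/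
/-!
Test with `t = 1 - s/2`. For `|z| ≤ 1` we have `|1 - tz| ≤ |1 - z| + (1 - t)`, so on the window
`|1 - tz| < 3s/2` and the kernel `|1 - tz|^{-2α-4}` is at least `(3s/2)^{-2α-4}` there. Markov's
inequality and `1 - t² ≥ s/2` then give
`μ(window) ≤ c (s/2)^{-α-2} (3s/2)^{2α+4} = c (9/2)^{α+2} s^{α+2}`.
-/

open MeasureTheory

lemma one_sub_le_norm_one_sub_ofReal_mul {t : ℝ} (ht : 0 ≤ t) {z : ℂ} (hz : ‖z‖ ≤ 1) :
    1 - t ≤ ‖1 - (t : ℂ) * z‖ := by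
  have h := norm_sub_norm_le (1 : ℂ) ((t : ℂ) * z)
  rw [norm_one, norm_mul, Complex.norm_real, Real.norm_of_nonneg ht] at h
  nlinarith

lemma norm_one_sub_ofReal_mul_le {t : ℝ} (ht : t ≤ 1) {z : ℂ} (hz : ‖z‖ ≤ 1) :
    ‖1 - (t : ℂ) * z‖ ≤ ‖1 - z‖ + (1 - t) := by
  have h1t : ‖(1 : ℂ) - t‖ = 1 - t := by
    rw [← Complex.ofReal_one, ← Complex.ofReal_sub, Complex.norm_real,
      Real.norm_of_nonneg (sub_nonneg.2 ht)]
  calc ‖1 - (t : ℂ) * z‖ = ‖(1 - z) + (1 - (t : ℂ)) * z‖ := by ring_nf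
    _ ≤ ‖1 - z‖ + (1 - t) * ‖z‖ := by rw [← h1t, ← norm_mul]; exact norm_add_le _ _
    _ ≤ ‖1 - z‖ + (1 - t) := by nlinarith [norm_nonneg z]

lemma measure_window_le_lintegral_div (μ : Measure ℂ) {q s t : ℝ} (hq : q ≤ 0) (hs : 0 ≤ s)
    (ht0 : 0 ≤ t) (ht1 : t < 1) :
    μ {z : ℂ | ‖z‖ ≤ 1 ∧ ‖1 - z‖ < s} ≤
      (∫⁻ z, ENNReal.ofReal (‖1 - (t : ℂ) * z‖ ^ q) ∂μ) / ENNReal.ofReal ((s + (1 - t)) ^ q) := by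
  refine (measure_mono fun z hz => ?_).trans
    (meas_ge_le_lintegral_div (ε := ENNReal.ofReal ((s + (1 - t)) ^ q)) (by fun_prop) ?_
      ENNReal.ofReal_ne_top)
  · obtain ⟨hz, hzs⟩ := hz
    have hpos : 0 < ‖1 - (t : ℂ) * z‖ :=
      (sub_pos.2 ht1).trans_le (one_sub_le_norm_one_sub_ofReal_mul ht0 hz)
    have hle : ‖1 - (t : ℂ) * z‖ ≤ s + (1 - t) :=
      (norm_one_sub_ofReal_mul_le ht1.le hz).trans (by linarith)
    exact ENNReal.ofReal_le_ofReal (Real.rpow_le_rpow_of_nonpos hpos hle hq)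
  · exact (ENNReal.ofReal_pos.2 (Real.rpow_pos_of_pos (by linarith) _)).ne'

lemma one_sub_sq_rpow_neg_div_rpow_le {p s : ℝ} (hp : 0 ≤ p) (hs : 0 < s) (hs2 : s ≤ 2) :
    (1 - (1 - s / 2) ^ 2) ^ (-p) / (s + s / 2) ^ (-2 * p) ≤ (9 / 2 * s) ^ p := by
  have hlow : s / 2 ≤ 1 - (1 - s / 2) ^ 2 := by nlinarith
  calc (1 - (1 - s / 2) ^ 2) ^ (-p) / (s + s / 2) ^ (-2 * p)
      ≤ (s / 2) ^ (-p) / (s + s / 2) ^ (-2 * p) := by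
        gcongr ?_ / _
        exact Real.rpow_le_rpow_of_nonpos (by positivity) hlow (by linarith)
    _ = (9 / 2 * s) ^ p := by
        rw [neg_mul, Real.rpow_neg (by positivity), Real.rpow_neg (by positivity), div_inv_eq_mul,
          Real.rpow_mul (by positivity), ← Real.inv_rpow (by positivity), Real.rpow_two,
          ← Real.mul_rpow (by positivity) (by positivity)]
        congr 1
        field_simp
        ring

theorem carleson_window_estimate_general (α : ℝ) (hα : -1 < α) (μ : Measure ℂ)
    (c : ℝ) (hc : 0 < c)
    (htest : ∀ t : ℝ, 0 < t → t < 1 →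
      ∫⁻ z, ENNReal.ofReal (‖1 - ((t : ℝ) : ℂ) * z‖ ^ (-2 * α - 4)) ∂μ
        ≤ ENNReal.ofReal (c * (1 - t ^ 2) ^ (-α - 2))) :
    ∃ a : ℝ, 1 ≤ a ∧ ∀ s : ℝ, 0 < s → s ≤ 1 →
      μ {z : ℂ | ‖z‖ ≤ 1 ∧ ‖1 - z‖ < s} ≤ ENNReal.ofReal (a * s ^ (α + 2)) := by
  refine ⟨max 1 (c * (9 / 2) ^ (α + 2)), le_max_left _ _, fun s hs hs1 => ?_⟩
  have hp : 0 ≤ α + 2 := by linarith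
  have hwindow := measure_window_le_lintegral_div μ (q := -2 * α - 4) (t := 1 - s / 2)
    (by linarith) hs.le (by linarith) (by linarith)
  rw [sub_sub_cancel] at hwindow
  calc μ {z : ℂ | ‖z‖ ≤ 1 ∧ ‖1 - z‖ < s}
      ≤ ENNReal.ofReal (c * (1 - (1 - s / 2) ^ 2) ^ (-α - 2)) /
          ENNReal.ofReal ((s + s / 2) ^ (-2 * α - 4)) :=
        hwindow.trans (by gcongr; exact htest _ (by linarith) (by linarith))
    _ = ENNReal.ofReal (c * ((1 - (1 - s / 2) ^ 2) ^ (-(α + 2)) /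
          (s + s / 2) ^ (-2 * (α + 2)))) := by
        rw [← ENNReal.ofReal_div_of_pos (by positivity), mul_div_assoc]
        ring_nf
    _ ≤ ENNReal.ofReal (max 1 (c * (9 / 2) ^ (α + 2)) * s ^ (α + 2)) := by
        refine ENNReal.ofReal_le_ofReal ?_
        calc c * _ ≤ c * (9 / 2 * s) ^ (α + 2) :=
              mul_le_mul_of_nonneg_left (one_sub_sq_rpow_neg_div_rpow_le hp hs (by linarith)) hc.le
          _ = c * (9 / 2) ^ (α + 2) * s ^ (α + 2) := by
              rw [Real.mul_rpow (by norm_num) hs.le, mul_assoc]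
          _ ≤ _ := by gcongr; exact le_max_right _ _

/-- Carleson condition from testing against kernels: if a finite positive
measure `μ` on the closed unit disk satisfies
`∫ |1 - tz|^{-2α-4} dμ ≤ c (1-t²)^{-α-2}` for all `t ∈ (0,1)`, then there is
`a ≥ 1` with `μ({|z| ≤ 1, |1-z| < s}) ≤ a s^{α+2}` for all `s ∈ (0,1]`. -/
theorem carleson_window_estimate (α : ℝ) (hα : -1 < α) (μ : Measure ℂ)
    [IsFiniteMeasure μ] (hsupp : μ {z : ℂ | ¬ ‖z‖ ≤ 1} = 0)
    (c : ℝ) (hc : 0 < c)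
    (htest : ∀ t : ℝ, 0 < t → t < 1 →
      ∫⁻ z, ENNReal.ofReal (‖1 - ((t : ℝ) : ℂ) * z‖ ^ (-2 * α - 4)) ∂μ
        ≤ ENNReal.ofReal (c * (1 - t ^ 2) ^ (-α - 2))) :
    ∃ a : ℝ, 1 ≤ a ∧ ∀ s : ℝ, 0 < s → s ≤ 1 →
      μ {z : ℂ | ‖z‖ ≤ 1 ∧ ‖1 - z‖ < s} ≤ ENNReal.ofReal (a * s ^ (α + 2)) :=
  carleson_window_estimate_general α hα μ c hc htest
end

section
/- Let f : 𝔻 → 𝔻 be a holomorphic self-map of the unit disk with f(0) = w₀, and let w ∈ 𝔻 \ {w₀} be a point not omitted by f. Then the Nevanlinna counting function N_f(w) = Σ_{z ∈ 𝔻, f(z) = w} (-log|z|) (zeros counted with multiplicity) satisfies N_f(w) ≤ -log|(w₀ - w)/(1 - conj(w₀)·w)|. -/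
/-!
Compose `f` with the disk automorphism moving `w` to `0`: `g = (f - w) / (1 - conj w * f)` maps
the disk into itself, vanishes exactly where `f = w` with the same multiplicities, and `‖g 0‖` is
the pseudo-hyperbolic distance between `w₀` and `w`. For `r < 1`, Jensen's formula on the circle of
radius `r` reads `∑_{‖z‖ ≤ r} m z * log (r / ‖z‖) = circleAverage (log ‖g‖) - log ‖g 0‖`, and the
circle average is `≤ 0` since `‖g‖ ≤ 1`. Letting `r → 1` bounds every finite partial sum of the
counting function by `-log ‖g 0‖`.
-/

open Metric Set Filter
open scoped Topology ComplexConjugate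

theorem Finset.sum_le_finsum_of_nonneg {α M : Type*} [AddCommMonoid M] [PartialOrder M]
    [IsOrderedAddMonoid M] {f : α → M} (hf : (Function.support f).Finite) (h0 : ∀ i, 0 ≤ f i)
    (s : Finset α) : ∑ i ∈ s, f i ≤ ∑ᶠ i, f i := by
  classical
  rw [finsum_eq_sum_of_support_subset f (s := s ∪ hf.toFinset) (by simp)]
  exact Finset.sum_le_sum_of_subset_of_nonneg Finset.subset_union_left fun i _ _ ↦ h0 i

theorem ENat.untop₀_map_natCast (n : ℕ∞) : (n.map ((↑) : ℕ → ℤ)).untop₀ = n.toNat := by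
  cases n <;> simp

theorem Real.continuousAt_log_mul_const {x : ℝ} (hx : x ≠ 0) (c : ℝ) :
    ContinuousAt (fun r ↦ Real.log (r * c)) x := by
  rcases eq_or_ne c 0 with rfl | hc
  · simpa using continuousAt_const
  · exact (continuousAt_id.mul continuousAt_const).log (mul_ne_zero hx hc)

theorem analyticOrderAt_div_of_ne_zero {𝕜 : Type*} [NontriviallyNormedField 𝕜] {f u : 𝕜 → 𝕜}
    {z : 𝕜} (hf : AnalyticAt 𝕜 f z) (hu : AnalyticAt 𝕜 u z) (huz : u z ≠ 0) :
    analyticOrderAt (fun ζ ↦ f ζ / u ζ) z = analyticOrderAt f z := by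
  have hinv : analyticOrderAt u⁻¹ z = 0 := analyticOrderAt_eq_zero.2 (.inr (by simpa using huz))
  rw [show (fun ζ ↦ f ζ / u ζ) = f * u⁻¹ from funext fun ζ ↦ div_eq_mul_inv _ _,
    analyticOrderAt_mul hf (hu.inv huz), hinv, add_zero]

namespace Complex

theorem one_sub_conj_mul_ne_zero {a z : ℂ} (ha : ‖a‖ < 1) (hz : ‖z‖ < 1) :
    1 - conj a * z ≠ 0 := by
  rw [sub_ne_zero]
  intro h
  have := congrArg norm h
  rw [norm_one, norm_mul, norm_conj] at this
  nlinarith [norm_nonneg a, norm_nonneg z]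

theorem norm_one_sub_conj_mul_comm (a z : ℂ) : ‖1 - conj a * z‖ = ‖1 - conj z * a‖ := by
  rw [← norm_conj]
  simp [mul_comm]

theorem norm_sq_one_sub_conj_mul_sub_norm_sq_sub (a z : ℂ) :
    ‖1 - conj a * z‖ ^ 2 - ‖z - a‖ ^ 2 = (1 - ‖a‖ ^ 2) * (1 - ‖z‖ ^ 2) := by
  simp only [Complex.sq_norm, normSq_apply, sub_re, sub_im, one_re, one_im, mul_re, mul_im,
    conj_re, conj_im]
  ring

theorem norm_sub_div_one_sub_conj_mul_lt_one {a z : ℂ} (ha : ‖a‖ < 1) (hz : ‖z‖ < 1) :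
    ‖(z - a) / (1 - conj a * z)‖ < 1 := by
  rw [norm_div, div_lt_one (norm_pos_iff.2 (one_sub_conj_mul_ne_zero ha hz))]
  have hpos : 0 < (1 - ‖a‖ ^ 2) * (1 - ‖z‖ ^ 2) := by
    apply mul_pos <;> nlinarith [norm_nonneg a, norm_nonneg z]
  have := norm_sq_one_sub_conj_mul_sub_norm_sq_sub a z
  exact (pow_lt_pow_iff_left₀ (norm_nonneg _) (norm_nonneg _) two_ne_zero).1 (by linarith)

end Complex

namespace AnalyticOnNhd

variable {g : ℂ → ℂ}

theorem sum_analyticOrderNatAt_mul_log_le {r : ℝ} (hr : 0 < r)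
    (hg : AnalyticOnNhd ℂ g (closedBall 0 r)) (hg0 : g 0 ≠ 0)
    (hle : ∀ z ∈ sphere (0 : ℂ) r, ‖g z‖ ≤ 1) (s : Finset ℂ) (hs : ↑s ⊆ closedBall (0 : ℂ) r) :
    ∑ z ∈ s, (analyticOrderNatAt g z : ℝ) * Real.log (r * ‖z‖⁻¹) ≤ -Real.log ‖g 0‖ := by
  rw [← abs_of_pos hr] at hg hle hs
  set D := MeromorphicOn.divisor g (closedBall 0 |r|) with hD
  have jensen := hg.circleAverage_log_norm hr.ne' hg0
  have hmean : Real.circleAverage (Real.log ‖g ·‖) 0 r ≤ 0 :=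
    Real.circleAverage_mono_on_of_le_circle
      (hg.mono sphere_subset_closedBall).meromorphicOn.circleIntegrable_log_norm
      fun z hz ↦ Real.log_nonpos (norm_nonneg _) (hle z hz)
  have hterm_nonneg : ∀ u, 0 ≤ (D u : ℝ) * Real.log (r * ‖0 - u‖⁻¹) := by
    intro u
    by_cases hu : u ∈ closedBall 0 |r|
    · refine mul_nonneg (Int.cast_nonneg (MeromorphicOn.AnalyticOnNhd.divisor_nonneg hg u)) ?_
      rcases eq_or_ne u 0 with rfl | hu0
      · simp
      · rw [mem_closedBall_zero_iff, abs_of_pos hr] at hu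
        rw [zero_sub, norm_neg, ← div_eq_mul_inv]
        exact Real.log_nonneg ((one_le_div (norm_pos_iff.2 hu0)).2 hu)
    · simp [D, hu]
  calc ∑ z ∈ s, (analyticOrderNatAt g z : ℝ) * Real.log (r * ‖z‖⁻¹)
      = ∑ z ∈ s, (D z : ℝ) * Real.log (r * ‖0 - z‖⁻¹) := by
        refine Finset.sum_congr rfl fun z hz ↦ ?_
        rw [hD, MeromorphicOn.AnalyticOnNhd.divisor_apply hg (hs hz), ENat.untop₀_map_natCast,
          zero_sub, norm_neg]
        rfl
    _ ≤ ∑ᶠ u, (D u : ℝ) * Real.log (r * ‖0 - u‖⁻¹) :=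
        Finset.sum_le_finsum_of_nonneg
          ((D.finiteSupport (isCompact_closedBall 0 |r|)).subset fun u hu hDu ↦ hu (by simp [hDu]))
          hterm_nonneg s
    _ ≤ -Real.log ‖g 0‖ := by linarith

theorem sum_analyticOrderNatAt_mul_neg_log_le (hg : AnalyticOnNhd ℂ g (ball 0 1))
    (hg0 : g 0 ≠ 0) (hle : ∀ z ∈ ball (0 : ℂ) 1, ‖g z‖ ≤ 1) (s : Finset ℂ)
    (hs : ↑s ⊆ ball (0 : ℂ) 1) :
    ∑ z ∈ s, (analyticOrderNatAt g z : ℝ) * -Real.log ‖z‖ ≤ -Real.log ‖g 0‖ := by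
  have hlim : Tendsto (fun r ↦ ∑ z ∈ s, (analyticOrderNatAt g z : ℝ) * Real.log (r * ‖z‖⁻¹))
      (𝓝[<] 1) (𝓝 (∑ z ∈ s, (analyticOrderNatAt g z : ℝ) * -Real.log ‖z‖)) := by
    refine tendsto_finsetSum s fun z _ ↦ ?_
    have hterm := ((Real.continuousAt_log_mul_const one_ne_zero ‖z‖⁻¹).tendsto.mono_left
      (nhdsWithin_le_nhds (s := Iio 1))).const_mul (analyticOrderNatAt g z : ℝ)
    simpa only [one_mul, Real.log_inv] using hterm
  have hradius : ∀ᶠ r in 𝓝[<] (1 : ℝ), 0 < r ∧ r < 1 ∧ ∀ z ∈ s, ‖z‖ < r := by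
    refine (eventually_nhdsWithin_of_eventually_nhds (eventually_gt_nhds one_pos)).and
      (eventually_mem_nhdsWithin.and (eventually_nhdsWithin_of_eventually_nhds ?_))
    exact s.eventually_all.2 fun z hz ↦ eventually_gt_nhds (mem_ball_zero_iff.1 (hs hz))
  refine le_of_tendsto hlim ?_
  filter_upwards [hradius] with r ⟨hr0, hr1, hsr⟩
  have hsub : closedBall (0 : ℂ) r ⊆ ball 0 1 := closedBall_subset_ball hr1
  exact (hg.mono hsub).sum_analyticOrderNatAt_mul_log_le hr0 hg0
    (fun z hz ↦ hle z (hsub (sphere_subset_closedBall hz))) s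
    fun z hz ↦ mem_closedBall_zero_iff.2 (hsr z hz).le

theorem tsum_indicator_analyticOrderNatAt_mul_neg_log_le (hg : AnalyticOnNhd ℂ g (ball 0 1))
    (hg0 : g 0 ≠ 0) (hle : ∀ z ∈ ball (0 : ℂ) 1, ‖g z‖ ≤ 1) :
    ∑' z, (ball (0 : ℂ) 1).indicator (fun z ↦ (analyticOrderNatAt g z : ℝ) * -Real.log ‖z‖) z
      ≤ -Real.log ‖g 0‖ := by
  classical
  refine tsum_le_of_sum_le' ?_ fun s ↦ ?_
  · exact neg_nonneg.2 (Real.log_nonpos (norm_nonneg _) (hle 0 (mem_ball_self one_pos)))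
  · rw [Finset.sum_indicator_eq_sum_filter]
    exact hg.sum_analyticOrderNatAt_mul_neg_log_le hg0 hle _ fun z hz ↦ (Finset.mem_filter.1 hz).2

end AnalyticOnNhd

theorem littlewood_inequality_general (f : ℂ → ℂ)
    (hf : DifferentiableOn ℂ f (Metric.ball 0 1))
    (hmaps : Set.MapsTo f (Metric.ball 0 1) (Metric.ball 0 1))
    (w₀ : ℂ) (hw₀ : f 0 = w₀) (w : ℂ) (hw : w ∈ Metric.ball (0 : ℂ) 1)
    (hww₀ : w ≠ w₀)
    (m : ℂ → ℕ)
    (hm : ∀ z ∈ Metric.ball (0 : ℂ) 1,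
      ∃ h : AnalyticAt ℂ (fun ζ => f ζ - w) z, analyticOrderAt (fun ζ => f ζ - w) z = (m z : ℕ∞)) :
    (∑' z : ℂ,
        Set.indicator (Metric.ball (0 : ℂ) 1)
          (fun z => (m z : ℝ) * (-Real.log ‖z‖)) z)
      ≤ -Real.log ‖(w₀ - w) / (1 - (starRingEnd ℂ) w₀ * w)‖ := by
  rw [mem_ball_zero_iff] at hw
  have hfz : ∀ z ∈ ball (0 : ℂ) 1, ‖f z‖ < 1 := fun z hz ↦ mem_ball_zero_iff.1 (hmaps hz)
  have hden : ∀ z ∈ ball (0 : ℂ) 1, 1 - conj w * f z ≠ 0 := fun z hz ↦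
    Complex.one_sub_conj_mul_ne_zero hw (hfz z hz)
  have hden_analytic : ∀ z ∈ ball (0 : ℂ) 1, AnalyticAt ℂ (fun ζ ↦ 1 - conj w * f ζ) z :=
    fun z hz ↦ analyticAt_const.sub (analyticAt_const.mul (hf.analyticOnNhd isOpen_ball z hz))
  set g : ℂ → ℂ := fun z ↦ (f z - w) / (1 - conj w * f z)
  have hg : AnalyticOnNhd ℂ g (ball 0 1) := fun z hz ↦
    (hm z hz).1.div (hden_analytic z hz) (hden z hz)
  have hg0 : g 0 ≠ 0 :=
    div_ne_zero (sub_ne_zero.2 (hw₀ ▸ hww₀.symm)) (hden 0 (mem_ball_self one_pos))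
  have hnorm_g0 : ‖g 0‖ = ‖(w₀ - w) / (1 - conj w₀ * w)‖ := by
    simp only [g, hw₀, norm_div, Complex.norm_one_sub_conj_mul_comm w]
  have hm_eq : ∀ z ∈ ball (0 : ℂ) 1, m z = analyticOrderNatAt g z := fun z hz ↦ by
    have hord : analyticOrderAt g z = analyticOrderAt (fun ζ ↦ f ζ - w) z :=
      analyticOrderAt_div_of_ne_zero (hm z hz).1 (hden_analytic z hz) (hden z hz)
    rw [analyticOrderNatAt, hord, (hm z hz).2, ENat.toNat_natCast]
  have hcount : (ball (0 : ℂ) 1).indicator (fun z ↦ (m z : ℝ) * -Real.log ‖z‖)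
      = (ball 0 1).indicator (fun z ↦ (analyticOrderNatAt g z : ℝ) * -Real.log ‖z‖) :=
    indicator_congr fun z hz ↦ by rw [hm_eq z hz]
  rw [hcount, ← hnorm_g0]
  exact hg.tsum_indicator_analyticOrderNatAt_mul_neg_log_le hg0
    fun z hz ↦ (Complex.norm_sub_div_one_sub_conj_mul_lt_one hw (hfz z hz)).le

/-- Littlewood's inequality: for a holomorphic self-map `f` of the unit disk
with `f(0) = w₀` and a point `w ≠ w₀` in the range of `f`, the Nevanlinna
counting function `N_f(w) = Σ_{f(z)=w} (-log|z|)` (with multiplicities `m z`)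
satisfies `N_f(w) ≤ -log|(w₀ - w)/(1 - conj w₀ · w)|`. -/
theorem littlewood_inequality (f : ℂ → ℂ)
    (hf : DifferentiableOn ℂ f (Metric.ball 0 1))
    (hmaps : Set.MapsTo f (Metric.ball 0 1) (Metric.ball 0 1))
    (w₀ : ℂ) (hw₀ : f 0 = w₀) (w : ℂ) (hw : w ∈ Metric.ball (0 : ℂ) 1)
    (hww₀ : w ≠ w₀) (hrange : ∃ z ∈ Metric.ball (0 : ℂ) 1, f z = w)
    (m : ℂ → ℕ)
    (hm : ∀ z ∈ Metric.ball (0 : ℂ) 1,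
      ∃ h : AnalyticAt ℂ (fun ζ => f ζ - w) z, analyticOrderAt (fun ζ => f ζ - w) z = (m z : ℕ∞)) :
    (∑' z : ℂ,
        Set.indicator (Metric.ball (0 : ℂ) 1)
          (fun z => (m z : ℝ) * (-Real.log ‖z‖)) z)
      ≤ -Real.log ‖(w₀ - w) / (1 - (starRingEnd ℂ) w₀ * w)‖ :=
  littlewood_inequality_general f hf hmaps w₀ hw₀ w hw hww₀ m hm
end
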